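/- Let φ : Δ^{0̂} → Δ be a group epimorphism and N ≤ Δ a subgroup containing no conjugate of R₀, R₁ or R₂ (no boundary), and suppose R₁, R₂, R₁^{R₀}, R₂^{R₀} ∉ Δ⁺ φ⁻¹. Then N φ⁻¹ contains no conjugate in Δ^{0̂} of R₁, R₂, R₁^{R₀} or R₂^{R₀}. -/

import Mathlib

/-- The relations making each generator an involution. -/
def rels : Set (FreeGroup (Fin 3)) := {x | ∃ i, x = (FreeGroup.of i) ^ 2}

/-- Δ = C₂ * C₂ * C₂. -/
abbrev Δ := PresentedGroup rels

/-- The generators R₀, R₁, R₂ of Δ. -/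
def R (i : Fin 3) : Δ := PresentedGroup.of i

/-- Δ^{0̂}, the normal closure of {R₁, R₂}, an index-2 subgroup of Δ. -/
def Δ0 : Subgroup Δ := Subgroup.normalClosure {R 1, R 2}

/-- Δ⁺, the even-word subgroup of Δ. -/
def Δplus : Subgroup Δ := Subgroup.closure {R 1 * R 2, R 2 * R 0, R 0 * R 1}

/-- The preimage H φ⁻¹, regarded as a subgroup of Δ. -/
def preim (φ : Δ0 →* Δ) (H : Subgroup Δ) : Subgroup Δ :=
  (H.comap φ).map Δ0.subtype

/-- The kernel of φ, regarded as a subgroup of Δ. -/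
def kerS (φ : Δ0 →* Δ) : Subgroup Δ := φ.ker.map Δ0.subtype

/-- The conjugate K^g = g⁻¹ K g. -/
def conjS (K : Subgroup Δ) (g : Δ) : Subgroup Δ :=
  K.map (MulAut.conj g⁻¹).toMonoidHom

/-- The four involutions R₁, R₂, R₁^{R₀}, R₂^{R₀} generating Δ^{0̂}. -/
def gens : Set Δ := {R 1, R 2, (R 0)⁻¹ * R 1 * R 0, (R 0)⁻¹ * R 2 * R 0}

/-!
`Δ` acts on reduced words (words in `Fin 3` without two equal neighbours) by letting `R i`
cancel or prepend a leading `i`; evaluating at the empty word gives a normal form, so a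
nonempty reduced word is not `1`. If a nonempty reduced word `w` has `w * w = 1`, it must start
and end with the same letter `a` (otherwise `w ++ w` is reduced), so `w = a w' a` with
`w' * w' = 1`, and induction shows that every involution of `Δ` is conjugate to some `R i`.
For `s ∈ gens` and `c ∈ Δ^{0̂}`, the image `φ (c⁻¹ s c)` is an involution, nontrivial because
`φ s ∉ Δ⁺`; hence it is conjugate to some `R i` and cannot lie in `N`.
-/

namespace Delta

lemma R_mul_self (i : Fin 3) : R i * R i = 1 := by
  have h : PresentedGroup.mk rels (FreeGroup.of i ^ 2) = 1 :=
    (QuotientGroup.eq_one_iff _).2 (Subgroup.subset_normalClosure ⟨i, rfl⟩)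
  simpa [R, PresentedGroup.of, sq] using h

lemma R_inv (i : Fin 3) : (R i)⁻¹ = R i :=
  inv_eq_of_mul_eq_one_right (R_mul_self i)

def ofWord (l : List (Fin 3)) : Δ := (l.map R).prod

@[simp] lemma ofWord_nil : ofWord [] = 1 := rfl

@[simp] lemma ofWord_cons (i : Fin 3) (l : List (Fin 3)) : ofWord (i :: l) = R i * ofWord l := rfl

@[simp] lemma ofWord_append (l m : List (Fin 3)) : ofWord (l ++ m) = ofWord l * ofWord m := by
  simp [ofWord]

def reduceCons (i : Fin 3) : List (Fin 3) → List (Fin 3)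
  | [] => [i]
  | a :: t => if a = i then t else i :: a :: t

lemma ofWord_reduceCons (i : Fin 3) (l : List (Fin 3)) :
    ofWord (reduceCons i l) = R i * ofWord l := by
  cases l with
  | nil => simp [reduceCons]
  | cons a t =>
    by_cases hai : a = i
    · simp [reduceCons, hai, ← mul_assoc, R_mul_self]
    · simp [reduceCons, hai]

lemma reduceCons_of_isChain {i : Fin 3} {l : List (Fin 3)} (h : (i :: l).IsChain (· ≠ ·)) :
    reduceCons i l = i :: l := by
  cases l with
  | nil => rfl
  | cons a t => exact if_neg (List.isChain_cons_cons.1 h).1.symm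

lemma isChain_reduceCons (i : Fin 3) {l : List (Fin 3)} (h : l.IsChain (· ≠ ·)) :
    (reduceCons i l).IsChain (· ≠ ·) := by
  cases l with
  | nil => exact List.isChain_singleton i
  | cons a t =>
    by_cases hai : a = i
    · simpa [reduceCons, hai] using h.tail
    · simpa [reduceCons, hai] using h.cons_cons (Ne.symm hai)

lemma reduceCons_reduceCons (i : Fin 3) {l : List (Fin 3)} (h : l.IsChain (· ≠ ·)) :
    reduceCons i (reduceCons i l) = l := by
  cases l with
  | nil => simp [reduceCons]
  | cons a t =>
    by_cases hai : a = i
    · subst hai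
      simpa [reduceCons] using reduceCons_of_isChain h
    · simp [reduceCons, hai]

abbrev ReducedWord := {l : List (Fin 3) // l.IsChain (· ≠ ·)}

def reduceConsPerm (i : Fin 3) : Equiv.Perm ReducedWord :=
  Function.Involutive.toPerm (fun l => ⟨reduceCons i l, isChain_reduceCons i l.2⟩)
    fun l => Subtype.ext (reduceCons_reduceCons i l.2)

lemma reduceConsPerm_apply (i : Fin 3) (l : ReducedWord) :
    (reduceConsPerm i l).1 = reduceCons i l.1 := rfl

def toPerm : Δ →* Equiv.Perm ReducedWord :=
  PresentedGroup.toGroup (f := reduceConsPerm) <| by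
    rintro _ ⟨i, rfl⟩
    rw [sq, map_mul, FreeGroup.lift_apply_of]
    exact Equiv.ext fun l => Subtype.ext (reduceCons_reduceCons i l.2)

lemma toPerm_R (i : Fin 3) : toPerm (R i) = reduceConsPerm i :=
  PresentedGroup.toGroup.of _

lemma ofWord_toPerm (x : Δ) (l : ReducedWord) : ofWord (toPerm x l).1 = x * ofWord l.1 := by
  have hx : x ∈ Subgroup.closure (Set.range R) := by
    rw [show Set.range R = Set.range PresentedGroup.of from rfl, PresentedGroup.closure_range_of]
    trivial
  induction hx using Subgroup.closure_induction generalizing l with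
  | mem _ h =>
    obtain ⟨i, rfl⟩ := h
    rw [toPerm_R]
    exact ofWord_reduceCons i l.1
  | one => simp
  | mul x y _ _ hx hy => rw [map_mul, Equiv.Perm.mul_apply, hx, hy, mul_assoc]
  | inv x _ hx =>
    rw [eq_inv_mul_iff_mul_eq, ← hx, ← Equiv.Perm.mul_apply, ← map_mul, mul_inv_cancel, map_one]
    rfl

def normalForm (x : Δ) : ReducedWord := toPerm x ⟨[], List.isChain_nil⟩

lemma ofWord_normalForm (x : Δ) : ofWord (normalForm x).1 = x :=
  (ofWord_toPerm x _).trans (mul_one x)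

lemma normalForm_R_mul (i : Fin 3) (x : Δ) :
    (normalForm (R i * x)).1 = reduceCons i (normalForm x).1 := by
  rw [normalForm, map_mul, Equiv.Perm.mul_apply, toPerm_R, reduceConsPerm_apply]
  rfl

lemma normalForm_ofWord {l : List (Fin 3)} (h : l.IsChain (· ≠ ·)) :
    (normalForm (ofWord l)).1 = l := by
  induction l with
  | nil => simp [normalForm]
  | cons i t ih =>
    rw [ofWord_cons, normalForm_R_mul, ih h.tail, reduceCons_of_isChain h]

lemma ofWord_eq_one_iff {l : List (Fin 3)} (h : l.IsChain (· ≠ ·)) : ofWord l = 1 ↔ l = [] := by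
  refine ⟨fun h1 => ?_, fun h1 => h1 ▸ rfl⟩
  rw [← normalForm_ofWord h, h1]
  rfl

theorem exists_eq_conj_R_of_ofWord_mul_self :
    ∀ l : List (Fin 3), l.IsChain (· ≠ ·) → l ≠ [] → ofWord l * ofWord l = 1 →
      ∃ i g, ofWord l = g⁻¹ * R i * g
  | [a], _, _, _ => ⟨a, 1, by simp⟩
  | a :: b :: t, hl, _, hsq => by
    obtain ⟨m, z, hmz⟩ : ∃ m z, b :: t = m ++ [z] :=
      (List.eq_nil_or_concat' (b :: t)).resolve_left (List.cons_ne_nil b t)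
    have hlen : m.length < (a :: b :: t).length := by simp [hmz]
    rw [hmz] at hl hsq ⊢
    by_cases hza : z = a
    · subst hza
      have hm : m ≠ [] := by
        rintro rfl
        exact (List.isChain_cons_cons.1 hl).1 rfl
      have hw : ofWord (z :: (m ++ [z])) = (R z)⁻¹ * ofWord m * R z := by
        simp [R_inv, mul_assoc]
      have hmsq : ofWord m * ofWord m = 1 := by
        rw [hw] at hsq
        calc ofWord m * ofWord m
            = R z * ((R z)⁻¹ * ofWord m * R z * ((R z)⁻¹ * ofWord m * R z)) * (R z)⁻¹ := by group
          _ = 1 := by rw [hsq]; group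
      obtain ⟨i, g, hg⟩ := exists_eq_conj_R_of_ofWord_mul_self m hl.tail.left_of_append hm hmsq
      exact ⟨i, g * R z, by rw [hw, hg]; group⟩
    · have hll : (a :: (m ++ [z]) ++ a :: (m ++ [z])).IsChain (· ≠ ·) :=
        hl.append hl fun x hx y hy => by
          rw [Option.mem_def, ← List.cons_append, List.getLast?_concat, Option.some_inj] at hx
          rw [Option.mem_def, List.head?_cons, Option.some_inj] at hy
          exact hx ▸ hy ▸ hza
      rw [← ofWord_append, ofWord_eq_one_iff hll] at hsq
      simp at hsq
termination_by l => l.length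
decreasing_by simp only [List.length_cons] at hlen ⊢; omega

theorem exists_eq_conj_R_of_mul_self (w : Δ) (hw : w * w = 1) (hne : w ≠ 1) :
    ∃ i g, w = g⁻¹ * R i * g := by
  rw [← ofWord_normalForm w] at hw hne ⊢
  exact exists_eq_conj_R_of_ofWord_mul_self _ (normalForm w).2
    (fun h => hne (by rw [h, ofWord_nil])) hw

end Delta

open Delta

lemma gens_subset_Δ0 : gens ⊆ Δ0 := by
  have h1 : R 1 ∈ Δ0 := Subgroup.subset_normalClosure (by simp)
  have h2 : R 2 ∈ Δ0 := Subgroup.subset_normalClosure (by simp)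
  have hconj : ∀ x ∈ Δ0, (R 0)⁻¹ * x * R 0 ∈ Δ0 := fun x hx => by
    have h := (Subgroup.normalClosure_normal : Δ0.Normal).conj_mem x hx (R 0)⁻¹
    rwa [inv_inv] at h
  rintro s (rfl | rfl | rfl | rfl)
  exacts [h1, h2, hconj _ h1, hconj _ h2]

lemma mul_self_eq_one_of_mem_gens {s : Δ} (hs : s ∈ gens) : s * s = 1 := by
  have hconj : ∀ i, (R 0)⁻¹ * R i * R 0 * ((R 0)⁻¹ * R i * R 0) = 1 := fun i => by
    rw [show (R 0)⁻¹ * R i * R 0 * ((R 0)⁻¹ * R i * R 0) = (R 0)⁻¹ * (R i * R i) * R 0 by group,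
      R_mul_self]
    group
  rcases hs with rfl | rfl | rfl | rfl
  exacts [R_mul_self 1, R_mul_self 2, hconj 1, hconj 2]

theorem stmt15_general (φ : Δ0 →* Δ)
    (N : Subgroup Δ) (hN : ∀ i : Fin 3, ∀ c : Δ, c⁻¹ * R i * c ∉ N)
    (hgens : ∀ s ∈ gens, s ∉ preim φ Δplus) :
    ∀ s ∈ gens, ∀ c ∈ Δ0, c⁻¹ * s * c ∉ preim φ N := by
  rintro s hs c hc ⟨y, hyN, hy⟩
  set S : Δ0 := ⟨s, gens_subset_Δ0 hs⟩
  have hφy : φ y = MulAut.conj (φ ⟨c, hc⟩)⁻¹ (φ S) := by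
    rw [MulAut.conj_apply, inv_inv, ← map_inv, ← map_mul, ← map_mul]
    exact congrArg φ (Subtype.ext hy)
  have hS : φ S ≠ 1 := fun h => hgens s hs ⟨S, by simp [h], rfl⟩
  have hSS : φ S * φ S = 1 := by
    rw [← map_mul, show S * S = 1 from Subtype.ext (mul_self_eq_one_of_mem_gens hs), map_one]
  obtain ⟨i, g, hg⟩ := exists_eq_conj_R_of_mul_self (φ y)
    (by rw [hφy, ← map_mul, hSS, map_one]) (by rwa [hφy, MulEquiv.map_ne_one_iff])
  exact hN i g (hg ▸ hyN)

theorem stmt15 (φ : Δ0 →* Δ) (hφ : Function.Surjective φ)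
    (N : Subgroup Δ) (hN : ∀ i : Fin 3, ∀ c : Δ, c⁻¹ * R i * c ∉ N)
    (hgens : ∀ s ∈ gens, s ∉ preim φ Δplus) :
    ∀ s ∈ gens, ∀ c ∈ Δ0, c⁻¹ * s * c ∉ preim φ N :=
  stmt15_general φ N hN hgens
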